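/- Let M = U ×_f V be a warped product whose metric g is super generalized recurrent (SGK_n) with associated 1-forms (Π, Φ, Ψ, Θ). Then at every point x ∈ M at which the fiber part of Π is nonzero (i.e. Π_ε(x) ≠ 0 for some ε ∈ {p+1,…,n}), the base metric ḡ is of generalized Roter type GRT_p with (R̄; ḡ, S̄, T): there exist real numbers L₁,…,L₆ such that R̄_{abcd} = L₁ (ḡ∧ḡ)_{abcd} − L₂ (ḡ∧S̄)_{abcd} − L₃ (S̄∧S̄)_{abcd} − L₄ (ḡ∧T)_{abcd} − L₅ (S̄∧T)_{abcd} − L₆ (T∧T)_{abcd} at x for all indices a,b,c,d. -/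

import Mathlib

noncomputable section

/-- Partial derivative of a scalar function along the `j`-th coordinate direction. -/
def pd {k : ℕ} (F : (Fin k → ℝ) → ℝ) (j : Fin k) (x : Fin k → ℝ) : ℝ :=
  fderiv ℝ F x (Pi.single j 1)

/-- Christoffel symbols `Γ^i_{jl}` of a metric `h` with (pointwise) inverse `hinv`. -/
def Christoffel {k : ℕ} (h hinv : (Fin k → ℝ) → Fin k → Fin k → ℝ)
    (i j l : Fin k) (x : Fin k → ℝ) : ℝ :=
  (1 / 2) * ∑ r, hinv x i r *
    (pd (fun y => h y r l) j x + pd (fun y => h y j r) l x - pd (fun y => h y j l) r x)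

/-- The (0,4) Riemann-Christoffel curvature tensor of `h`. -/
def Riem {k : ℕ} (h hinv : (Fin k → ℝ) → Fin k → Fin k → ℝ)
    (x : Fin k → ℝ) (i j s l : Fin k) : ℝ :=
  ∑ r, h x i r *
    (pd (Christoffel h hinv r l j) s x - pd (Christoffel h hinv r s j) l x
      + (∑ t, Christoffel h hinv r s t x * Christoffel h hinv t l j x)
      - ∑ t, Christoffel h hinv r l t x * Christoffel h hinv t s j x)

/-- The Ricci tensor of `h`. -/
def Ric {k : ℕ} (h hinv : (Fin k → ℝ) → Fin k → Fin k → ℝ)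
    (x : Fin k → ℝ) (j l : Fin k) : ℝ :=
  ∑ i, ∑ s, hinv x i s * Riem h hinv x i j s l

/-- The scalar curvature of `h`. -/
def Scal {k : ℕ} (h hinv : (Fin k → ℝ) → Fin k → Fin k → ℝ) (x : Fin k → ℝ) : ℝ :=
  ∑ j, ∑ l, hinv x j l * Ric h hinv x j l

/-- Covariant derivative (w.r.t. the Levi-Civita connection of `h`) of a (0,4) tensor field. -/
def cov4 {k : ℕ} (h hinv : (Fin k → ℝ) → Fin k → Fin k → ℝ)
    (T : (Fin k → ℝ) → Fin k → Fin k → Fin k → Fin k → ℝ)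
    (x : Fin k → ℝ) (i j s l m : Fin k) : ℝ :=
  pd (fun y => T y i j s l) m x
    - (∑ r, Christoffel h hinv r m i x * T x r j s l)
    - (∑ r, Christoffel h hinv r m j x * T x i r s l)
    - (∑ r, Christoffel h hinv r m s x * T x i j r l)
    - ∑ r, Christoffel h hinv r m l x * T x i j s r

/-- Covariant derivative of a (0,2) tensor field. -/
def cov2 {k : ℕ} (h hinv : (Fin k → ℝ) → Fin k → Fin k → ℝ)
    (T : (Fin k → ℝ) → Fin k → Fin k → ℝ) (x : Fin k → ℝ) (i j m : Fin k) : ℝ :=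
  pd (fun y => T y i j) m x
    - (∑ r, Christoffel h hinv r m i x * T x r j)
    - ∑ r, Christoffel h hinv r m j x * T x i r

/-- Kulkarni-Nomizu product of two (0,2) tensors. -/
def KN {k : ℕ} (A E : (Fin k → ℝ) → Fin k → Fin k → ℝ)
    (x : Fin k → ℝ) (i j s l : Fin k) : ℝ :=
  A x i l * E x j s + A x j s * E x i l - A x i s * E x j l - A x j l * E x i s

/-- The Gaussian curvature tensor `G_{ijsl} = h_{il}h_{js} - h_{is}h_{jl}`. -/
def Gt {k : ℕ} (h : (Fin k → ℝ) → Fin k → Fin k → ℝ)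
    (x : Fin k → ℝ) (i j s l : Fin k) : ℝ :=
  h x i l * h x j s - h x i s * h x j l

/-- The conformal (Weyl) curvature tensor of a `k`-dimensional metric `h`. -/
def Weyl {k : ℕ} (h hinv : (Fin k → ℝ) → Fin k → Fin k → ℝ)
    (x : Fin k → ℝ) (i j s l : Fin k) : ℝ :=
  Riem h hinv x i j s l - (1 / ((k : ℝ) - 2)) * KN h (Ric h hinv) x i j s l
    + (Scal h hinv x / (2 * ((k : ℝ) - 1) * ((k : ℝ) - 2))) * KN h h x i j s l

/-- Recurrency condition at a point. -/
def Recur {k : ℕ} (h hinv : (Fin k → ℝ) → Fin k → Fin k → ℝ)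
    (piF : (Fin k → ℝ) → Fin k → ℝ) (x : Fin k → ℝ) : Prop :=
  ∀ i j s l m, cov4 h hinv (Riem h hinv) x i j s l m = piF x m * Riem h hinv x i j s l

/-- Hyper generalized recurrency condition at a point. -/
def HGK {k : ℕ} (h hinv : (Fin k → ℝ) → Fin k → Fin k → ℝ)
    (piF psiF : (Fin k → ℝ) → Fin k → ℝ) (x : Fin k → ℝ) : Prop :=
  ∀ i j s l m, cov4 h hinv (Riem h hinv) x i j s l m =
    piF x m * Riem h hinv x i j s l + psiF x m * KN h (Ric h hinv) x i j s l

/-- Weakly generalized recurrency condition at a point. -/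
def WGK {k : ℕ} (h hinv : (Fin k → ℝ) → Fin k → Fin k → ℝ)
    (piF phiF : (Fin k → ℝ) → Fin k → ℝ) (x : Fin k → ℝ) : Prop :=
  ∀ i j s l m, cov4 h hinv (Riem h hinv) x i j s l m =
    piF x m * Riem h hinv x i j s l
      + phiF x m * KN (Ric h hinv) (Ric h hinv) x i j s l

/-- Super generalized recurrency condition at a point. -/
def SGK {k : ℕ} (h hinv : (Fin k → ℝ) → Fin k → Fin k → ℝ)
    (piF phiF psiF thetaF : (Fin k → ℝ) → Fin k → ℝ) (x : Fin k → ℝ) : Prop :=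
  ∀ i j s l m, cov4 h hinv (Riem h hinv) x i j s l m =
    piF x m * Riem h hinv x i j s l
      + phiF x m * KN (Ric h hinv) (Ric h hinv) x i j s l
      + psiF x m * KN h (Ric h hinv) x i j s l
      + thetaF x m * KN h h x i j s l

/-- Base-point projection of a point of `M = U × V`. -/
def bpt {p q : ℕ} (z : Fin (p + q) → ℝ) : Fin p → ℝ := fun a => z (Fin.castAdd q a)

/-- Fiber-point projection of a point of `M = U × V`. -/
def fpt {p q : ℕ} (z : Fin (p + q) → ℝ) : Fin q → ℝ := fun a => z (Fin.natAdd p a)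

/-- Block-diagonal combination of a base tensor `A` and a fiber tensor `B` scaled by `c`. -/
def wPair {p q : ℕ} (A : (Fin p → ℝ) → Fin p → Fin p → ℝ)
    (B : (Fin q → ℝ) → Fin q → Fin q → ℝ) (c : (Fin p → ℝ) → ℝ)
    (z : Fin (p + q) → ℝ) (i j : Fin (p + q)) : ℝ :=
  Sum.elim
    (fun a => Sum.elim (fun b => A (bpt z) a b) (fun _ => (0 : ℝ)) (finSumFinEquiv.symm j))
    (fun a => Sum.elim (fun _ => (0 : ℝ)) (fun b => c (bpt z) * B (fpt z) a b)
      (finSumFinEquiv.symm j))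
    (finSumFinEquiv.symm i)

/-- The warped product metric `g = ḡ ⊕ f g̃`. -/
def wMet {p q : ℕ} (gbar : (Fin p → ℝ) → Fin p → Fin p → ℝ)
    (gtil : (Fin q → ℝ) → Fin q → Fin q → ℝ) (f : (Fin p → ℝ) → ℝ) :
    (Fin (p + q) → ℝ) → Fin (p + q) → Fin (p + q) → ℝ :=
  wPair gbar gtil f

/-- The inverse of the warped product metric. -/
def wMetInv {p q : ℕ} (gbinv : (Fin p → ℝ) → Fin p → Fin p → ℝ)
    (gtinv : (Fin q → ℝ) → Fin q → Fin q → ℝ) (f : (Fin p → ℝ) → ℝ) :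
    (Fin (p + q) → ℝ) → Fin (p + q) → Fin (p + q) → ℝ :=
  wPair gbinv gtinv fun x => (f x)⁻¹

/-- The set of points of `M = U × V` inside `ℝ^{p+q}`. -/
def Mset {p q : ℕ} (U : Set (Fin p → ℝ)) (V : Set (Fin q → ℝ)) : Set (Fin (p + q) → ℝ) :=
  {z | bpt z ∈ U ∧ fpt z ∈ V}

/-- The tensor `T_{ab} = -(1/(2f))(f_{a,b} - (1/(2f)) f_a f_b)`. -/
def Tten {p : ℕ} (gbar gbinv : (Fin p → ℝ) → Fin p → Fin p → ℝ) (f : (Fin p → ℝ) → ℝ)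
    (x : Fin p → ℝ) (a b : Fin p) : ℝ :=
  -(1 / (2 * f x)) *
    ((pd (fun y => pd f a y) b x - ∑ c, Christoffel gbar gbinv c b a x * pd f c x)
      - (1 / (2 * f x)) * pd f a x * pd f b x)

/-- `tr T = ḡ^{ab} T_{ab}`. -/
def trT {p : ℕ} (gbar gbinv : (Fin p → ℝ) → Fin p → Fin p → ℝ) (f : (Fin p → ℝ) → ℝ)
    (x : Fin p → ℝ) : ℝ :=
  ∑ a, ∑ b, gbinv x a b * Tten gbar gbinv f x a b

/-- `P = (1/(4f²)) ḡ^{ab} f_a f_b`. -/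
def Pw {p : ℕ} (gbinv : (Fin p → ℝ) → Fin p → Fin p → ℝ) (f : (Fin p → ℝ) → ℝ)
    (x : Fin p → ℝ) : ℝ :=
  (1 / (4 * f x ^ 2)) * ∑ a, ∑ b, gbinv x a b * pd f a x * pd f b x

/-- `Q = f((n-p-1)P - tr T)`, with `n - p = q`. -/
def Qw {p : ℕ} (q : ℕ) (gbar gbinv : (Fin p → ℝ) → Fin p → Fin p → ℝ)
    (f : (Fin p → ℝ) → ℝ) (x : Fin p → ℝ) : ℝ :=
  f x * (((q : ℝ) - 1) * Pw gbinv f x - trT gbar gbinv f x)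


/-!
Evaluate the SGK identity at `z` on four base indices `a, b, c, d` and a fiber direction `ε`.
The base block of the curvature tensor of `g` is `R̄ ∘ bpt`, independent of the fiber
coordinates, and all Christoffel symbols and curvature components needed with a single fiber
index vanish; hence `R_{abcd,ε} = 0`. The mixed components `R_{γaδb} = f g̃_{γδ} T_{ab}` make
the base block of the Ricci tensor equal to `S̄ + (n - p) T`. The identity thus becomes a linear
relation between `R̄`, `ḡ ∧ ḡ`, `ḡ ∧ (S̄ + (n - p) T)` and `(S̄ + (n - p) T) ∧ (S̄ + (n - p) T)`
with coefficient `Π_ε ≠ 0` in front of `R̄`, and bilinearity of `∧` solves it for `R̄`.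
-/

section PartialDerivatives

variable {k : ℕ} {u v : (Fin k → ℝ) → ℝ} {x : Fin k → ℝ}

lemma pd_congr (h : u =ᶠ[nhds x] v) (j : Fin k) : pd u j x = pd v j x := by
  rw [pd, pd, h.fderiv_eq]

@[simp]
lemma pd_const (c : ℝ) (j : Fin k) (x : Fin k → ℝ) : pd (fun _ => c) j x = 0 := by
  simp [pd]

@[simp]
lemma pd_zero (j : Fin k) (x : Fin k → ℝ) : pd 0 j x = 0 := by
  simp [pd]

lemma pd_mul (hu : DifferentiableAt ℝ u x) (hv : DifferentiableAt ℝ v x) (j : Fin k) :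
    pd (fun y => u y * v y) j x = pd u j x * v x + u x * pd v j x := by
  simp only [pd, fderiv_fun_mul hu hv, add_apply, smul_apply, smul_eq_mul]
  ring

lemma pd_inv (hv : DifferentiableAt ℝ v x) (h0 : v x ≠ 0) (j : Fin k) :
    pd (fun y => (v y)⁻¹) j x = -pd v j x / v x ^ 2 := by
  have h := (hasDerivAt_inv h0).comp_hasFDerivAt x hv.hasFDerivAt
  simp only [pd, Function.comp_def] at h ⊢
  rw [h.fderiv]
  simp only [neg_smul, neg_apply, smul_apply, smul_eq_mul]
  ring

lemma pd_div (hu : DifferentiableAt ℝ u x) (hv : DifferentiableAt ℝ v x) (h0 : v x ≠ 0)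
    (j : Fin k) :
    pd (fun y => u y / v y) j x = (pd u j x * v x - u x * pd v j x) / v x ^ 2 := by
  simp only [div_eq_mul_inv]
  rw [pd_mul (v := fun y => (v y)⁻¹) hu (hv.inv h0), pd_inv hv h0]
  field_simp
  ring

lemma pd_const_mul (hv : DifferentiableAt ℝ v x) (c : ℝ) (j : Fin k) :
    pd (fun y => c * v y) j x = c * pd v j x := by
  simp [pd, fderiv_const_mul hv c]

lemma differentiableAt_pd {U : Set (Fin k → ℝ)} (hU : IsOpen U)
    (hu : ContDiffOn ℝ (⊤ : ℕ∞) u U) (hx : x ∈ U) (j : Fin k) :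
    DifferentiableAt ℝ (pd u j) x := by
  have hu' : ContDiffAt ℝ 2 u x :=
    (hu.contDiffAt (hU.mem_nhds hx)).of_le (WithTop.coe_le_coe.mpr le_top)
  exact ((hu'.fderiv_right (m := 1) (by norm_num)).differentiableAt one_ne_zero).clm_apply
    (differentiableAt_const _)

end PartialDerivatives

section RightInverse

variable {𝕜 E F G : Type*} [NontriviallyNormedField 𝕜] [NormedAddCommGroup E] [NormedSpace 𝕜 E]
  [NormedAddCommGroup F] [NormedSpace 𝕜 F] [NormedAddCommGroup G] [NormedSpace 𝕜 G]

/-- Near `L z`, the map `g` factors as `(g ∘ L) ∘ (y ↦ R y + (z - R (L z)))`. -/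
theorem differentiableAt_comp_iff_of_rightInverse (L : E →L[𝕜] F) {R : F → E}
    (hR : Differentiable 𝕜 R) (hLR : Function.RightInverse R L) {g : F → G} {z : E} :
    DifferentiableAt 𝕜 (g ∘ L) z ↔ DifferentiableAt 𝕜 g (L z) := by
  refine ⟨fun h => ?_, fun h => h.comp z L.differentiableAt⟩
  have hsec : DifferentiableAt 𝕜 (fun y => R y + (z - R (L z))) (L z) :=
    (hR _).add_const _
  have hcomp := (show DifferentiableAt 𝕜 (g ∘ L) (R (L z) + (z - R (L z))) by
    rwa [add_sub_cancel]).comp (L z) hsec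
  convert hcomp using 1
  ext y
  simp [hLR y, hLR (L z)]

theorem fderiv_comp_of_rightInverse (L : E →L[𝕜] F) {R : F → E}
    (hR : Differentiable 𝕜 R) (hLR : Function.RightInverse R L) (g : F → G) (z : E) :
    fderiv 𝕜 (g ∘ L) z = (fderiv 𝕜 g (L z)).comp L := by
  by_cases hg : DifferentiableAt 𝕜 g (L z)
  · exact fderiv_comp z hg L.differentiableAt |>.trans (by rw [L.fderiv])
  · rw [fderiv_zero_of_not_differentiableAt hg, fderiv_zero_of_not_differentiableAt
      (by rwa [differentiableAt_comp_iff_of_rightInverse L hR hLR]), ContinuousLinearMap.zero_comp]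

end RightInverse

section ProductCoordinates

variable {p q : ℕ}

lemma castAdd_ne_natAdd (a : Fin p) (δ : Fin q) : Fin.castAdd q a ≠ Fin.natAdd p δ := by
  simp only [ne_eq, Fin.ext_iff, Fin.val_castAdd, Fin.val_natAdd]
  omega

def bptL (p q : ℕ) : (Fin (p + q) → ℝ) →L[ℝ] (Fin p → ℝ) :=
  ContinuousLinearMap.pi fun a => ContinuousLinearMap.proj (Fin.castAdd q a)

def fptL (p q : ℕ) : (Fin (p + q) → ℝ) →L[ℝ] (Fin q → ℝ) :=
  ContinuousLinearMap.pi fun a => ContinuousLinearMap.proj (Fin.natAdd p a)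

lemma differentiable_append_left (w : Fin q → ℝ) :
    Differentiable ℝ fun x : Fin p → ℝ => Fin.append x w := by
  refine differentiable_pi.2 fun i => ?_
  induction i using Fin.addCases with
  | left a => simpa using differentiable_apply a
  | right b => simp

lemma differentiable_append_right (x : Fin p → ℝ) :
    Differentiable ℝ fun w : Fin q → ℝ => Fin.append x w := by
  refine differentiable_pi.2 fun i => ?_
  induction i using Fin.addCases with
  | left a => simp
  | right b => simpa using differentiable_apply b

lemma pd_comp_bpt (G : (Fin p → ℝ) → ℝ) (j : Fin (p + q)) (z : Fin (p + q) → ℝ) :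
    pd (fun y => G (bpt y)) j z = fderiv ℝ G (bpt z) (bpt (Pi.single j 1)) :=
  congrArg (· (Pi.single j 1)) <| fderiv_comp_of_rightInverse (bptL p q)
    (differentiable_append_left 0) (fun x => funext fun a => Fin.append_left x 0 a) G z

lemma pd_comp_fpt (G : (Fin q → ℝ) → ℝ) (j : Fin (p + q)) (z : Fin (p + q) → ℝ) :
    pd (fun y => G (fpt y)) j z = fderiv ℝ G (fpt z) (fpt (Pi.single j 1)) :=
  congrArg (· (Pi.single j 1)) <| fderiv_comp_of_rightInverse (fptL p q)
    (differentiable_append_right 0) (fun w => funext fun b => Fin.append_right 0 w b) G z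

lemma pd_comp_bpt_castAdd (G : (Fin p → ℝ) → ℝ) (c : Fin p) (z : Fin (p + q) → ℝ) :
    pd (fun y => G (bpt y)) (Fin.castAdd q c) z = pd G c (bpt z) := by
  rw [pd_comp_bpt, pd]
  congr 1
  ext a
  simp [bpt, Pi.single_apply]

lemma pd_comp_bpt_natAdd (G : (Fin p → ℝ) → ℝ) (δ : Fin q) (z : Fin (p + q) → ℝ) :
    pd (fun y => G (bpt y)) (Fin.natAdd p δ) z = 0 := by
  rw [pd_comp_bpt]
  convert (fderiv ℝ G (bpt z)).map_zero
  ext a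
  simp [bpt, castAdd_ne_natAdd]

lemma pd_comp_fpt_natAdd (G : (Fin q → ℝ) → ℝ) (δ : Fin q) (z : Fin (p + q) → ℝ) :
    pd (fun y => G (fpt y)) (Fin.natAdd p δ) z = pd G δ (fpt z) := by
  rw [pd_comp_fpt, pd]
  congr 1
  ext a
  simp [fpt, Pi.single_apply]

lemma pd_comp_fpt_castAdd (G : (Fin q → ℝ) → ℝ) (c : Fin p) (z : Fin (p + q) → ℝ) :
    pd (fun y => G (fpt y)) (Fin.castAdd q c) z = 0 := by
  rw [pd_comp_fpt]
  convert (fderiv ℝ G (fpt z)).map_zero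
  ext a
  simp [fpt, (castAdd_ne_natAdd _ _).symm]

@[simp]
lemma pd_comp_bpt_castAdd₂ (A : (Fin p → ℝ) → Fin p → Fin p → ℝ) (a b c : Fin p)
    (z : Fin (p + q) → ℝ) :
    pd (fun y => A (bpt y) a b) (Fin.castAdd q c) z = pd (fun x => A x a b) c (bpt z) :=
  pd_comp_bpt_castAdd (fun x => A x a b) c z

@[simp]
lemma pd_comp_bpt_natAdd₂ (A : (Fin p → ℝ) → Fin p → Fin p → ℝ) (a b : Fin p) (δ : Fin q)
    (z : Fin (p + q) → ℝ) :
    pd (fun y => A (bpt y) a b) (Fin.natAdd p δ) z = 0 :=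
  pd_comp_bpt_natAdd (fun x => A x a b) δ z

@[simp]
lemma pd_comp_fpt_castAdd₂ (B : (Fin q → ℝ) → Fin q → Fin q → ℝ) (α β : Fin q) (c : Fin p)
    (z : Fin (p + q) → ℝ) :
    pd (fun y => B (fpt y) α β) (Fin.castAdd q c) z = 0 :=
  pd_comp_fpt_castAdd (fun w => B w α β) c z

lemma pd_comp_bpt_mul_comp_fpt_castAdd {u : (Fin p → ℝ) → ℝ}
    {B : (Fin q → ℝ) → Fin q → Fin q → ℝ} {z : Fin (p + q) → ℝ}
    (hu : DifferentiableAt ℝ u (bpt z)) (hB : ∀ α β, DifferentiableAt ℝ (fun y => B y α β) (fpt z))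
    (α β : Fin q) (c : Fin p) :
    pd (fun y => u (bpt y) * B (fpt y) α β) (Fin.castAdd q c) z =
      pd u c (bpt z) * B (fpt z) α β := by
  rw [pd_mul (u := fun y => u (bpt y)) (v := fun y => B (fpt y) α β)
    (hu.comp z (bptL p q).differentiableAt) ((hB α β).comp z (fptL p q).differentiableAt)]
  simp [pd_comp_bpt_castAdd]

lemma isOpen_Mset {U : Set (Fin p → ℝ)} {V : Set (Fin q → ℝ)} (hU : IsOpen U) (hV : IsOpen V) :
    IsOpen (Mset U V) :=
  (hU.preimage (bptL p q).continuous).inter (hV.preimage (fptL p q).continuous)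

end ProductCoordinates

section BlockComponents

variable {p q : ℕ} (A : (Fin p → ℝ) → Fin p → Fin p → ℝ) (B : (Fin q → ℝ) → Fin q → Fin q → ℝ)
  (c : (Fin p → ℝ) → ℝ) (z : Fin (p + q) → ℝ)

@[simp]
lemma wPair_castAdd_castAdd (a b : Fin p) :
    wPair A B c z (Fin.castAdd q a) (Fin.castAdd q b) = A (bpt z) a b := by
  simp [wPair]

@[simp]
lemma wPair_castAdd_natAdd (a : Fin p) (β : Fin q) :
    wPair A B c z (Fin.castAdd q a) (Fin.natAdd p β) = 0 := by
  simp [wPair]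

@[simp]
lemma wPair_natAdd_castAdd (α : Fin q) (b : Fin p) :
    wPair A B c z (Fin.natAdd p α) (Fin.castAdd q b) = 0 := by
  simp [wPair]

@[simp]
lemma wPair_natAdd_natAdd (α β : Fin q) :
    wPair A B c z (Fin.natAdd p α) (Fin.natAdd p β) = c (bpt z) * B (fpt z) α β := by
  simp [wPair]

end BlockComponents

lemma sum_mul_eq_ite_comm {k : ℕ} {M N : Fin k → Fin k → ℝ}
    (h : ∀ a b, ∑ c, M a c * N c b = if a = b then 1 else 0) (a b : Fin k) :
    ∑ c, N a c * M c b = if a = b then 1 else 0 := by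
  have hMN : Matrix.of M * Matrix.of N = 1 := by
    ext a b
    simpa [Matrix.mul_apply, Matrix.one_apply] using h a b
  simpa [Matrix.mul_apply, Matrix.one_apply] using
    congrArg (fun X : Matrix (Fin k) (Fin k) ℝ => X a b) (mul_eq_one_comm.mp hMN)

section WarpedProduct

variable {p q : ℕ} (gbar gbinv : (Fin p → ℝ) → Fin p → Fin p → ℝ)
  (gtil gtinv : (Fin q → ℝ) → Fin q → Fin q → ℝ) (f : (Fin p → ℝ) → ℝ) {a b c : Fin p}

local notation "𝐠" => wMet gbar gtil f
local notation "𝐠⁻¹" => wMetInv gbinv gtinv f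
local notation "Γ" => Christoffel 𝐠 𝐠⁻¹

@[simp]
lemma wMet_apply (z : Fin (p + q) → ℝ) (i j : Fin (p + q)) : 𝐠 z i j = wPair gbar gtil f z i j :=
  rfl

@[simp]
lemma wMetInv_apply (z : Fin (p + q) → ℝ) (i j : Fin (p + q)) :
    𝐠⁻¹ z i j = wPair gbinv gtinv (fun x => (f x)⁻¹) z i j :=
  rfl

@[simp]
lemma christoffel_wMet_base :
    Γ (Fin.castAdd q c) (Fin.castAdd q a) (Fin.castAdd q b) =
      fun z => Christoffel gbar gbinv c a b (bpt z) := by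
  ext z
  simp [Christoffel, Fin.sum_univ_add]

@[simp]
lemma christoffel_wMet_fiber_base_base (γ : Fin q) :
    Γ (Fin.natAdd p γ) (Fin.castAdd q a) (Fin.castAdd q b) = 0 := by
  ext z
  simp [Christoffel, Fin.sum_univ_add]

@[simp]
lemma christoffel_wMet_base_base_fiber (β : Fin q) :
    Γ (Fin.castAdd q c) (Fin.castAdd q a) (Fin.natAdd p β) = 0 := by
  ext z
  simp [Christoffel, Fin.sum_univ_add]

@[simp]
lemma christoffel_wMet_base_fiber_base (β : Fin q) :
    Γ (Fin.castAdd q c) (Fin.natAdd p β) (Fin.castAdd q a) = 0 := by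
  ext z
  simp [Christoffel, Fin.sum_univ_add]

variable {gtil gtinv f} {z : Fin (p + q) → ℝ}

lemma christoffel_wMet_fiber_base_fiber (hf : DifferentiableAt ℝ f (bpt z))
    (hg : ∀ α β, DifferentiableAt ℝ (fun y => gtil y α β) (fpt z))
    (hinv : ∀ α β, ∑ γ, gtinv (fpt z) α γ * gtil (fpt z) γ β = if α = β then 1 else 0)
    (γ β : Fin q) :
    Γ (Fin.natAdd p γ) (Fin.castAdd q a) (Fin.natAdd p β) z =
      if γ = β then pd f a (bpt z) / (2 * f (bpt z)) else 0 := by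
  calc _ = 2⁻¹ * ∑ δ, (f (bpt z))⁻¹ * gtinv (fpt z) γ δ * (pd f a (bpt z) * gtil (fpt z) δ β) := by
        simp [Christoffel, Fin.sum_univ_add, pd_comp_bpt_mul_comp_fpt_castAdd hf hg]
    _ = pd f a (bpt z) / (2 * f (bpt z)) * ∑ δ, gtinv (fpt z) γ δ * gtil (fpt z) δ β := by
        rw [Finset.mul_sum, Finset.mul_sum]
        exact Finset.sum_congr rfl fun δ _ => by ring
    _ = _ := by simp [hinv]

lemma christoffel_wMet_fiber_fiber_base (hf : DifferentiableAt ℝ f (bpt z))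
    (hg : ∀ α β, DifferentiableAt ℝ (fun y => gtil y α β) (fpt z))
    (hsymm : ∀ α β, gtil (fpt z) α β = gtil (fpt z) β α)
    (hinv : ∀ α β, ∑ γ, gtinv (fpt z) α γ * gtil (fpt z) γ β = if α = β then 1 else 0)
    (γ β : Fin q) :
    Γ (Fin.natAdd p γ) (Fin.natAdd p β) (Fin.castAdd q a) z =
      if γ = β then pd f a (bpt z) / (2 * f (bpt z)) else 0 := by
  calc _ = 2⁻¹ * ∑ δ, (f (bpt z))⁻¹ * gtinv (fpt z) γ δ * (pd f a (bpt z) * gtil (fpt z) β δ) := by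
        simp [Christoffel, Fin.sum_univ_add, pd_comp_bpt_mul_comp_fpt_castAdd hf hg]
    _ = pd f a (bpt z) / (2 * f (bpt z)) * ∑ δ, gtinv (fpt z) γ δ * gtil (fpt z) δ β := by
        rw [Finset.mul_sum, Finset.mul_sum]
        exact Finset.sum_congr rfl fun δ _ => by rw [hsymm]; ring
    _ = _ := by simp [hinv]

end WarpedProduct

section WarpedCurvature

variable {p q : ℕ} (gbar gbinv : (Fin p → ℝ) → Fin p → Fin p → ℝ)
  (gtil gtinv : (Fin q → ℝ) → Fin q → Fin q → ℝ) (f : (Fin p → ℝ) → ℝ) (z : Fin (p + q) → ℝ)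
  {a b c d : Fin p}

local notation "𝐠" => wMet gbar gtil f
local notation "𝐠⁻¹" => wMetInv gbinv gtinv f
local notation "𝐑" => Riem 𝐠 𝐠⁻¹

@[simp]
lemma riem_wMet_base :
    𝐑 z (Fin.castAdd q a) (Fin.castAdd q b) (Fin.castAdd q c) (Fin.castAdd q d) =
      Riem gbar gbinv (bpt z) a b c d := by
  simp [Riem, Fin.sum_univ_add, pd_comp_bpt_castAdd]

@[simp]
lemma riem_wMet_fiber_base_base_base (α : Fin q) :
    𝐑 z (Fin.natAdd p α) (Fin.castAdd q b) (Fin.castAdd q c) (Fin.castAdd q d) = 0 := by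
  simp [Riem, Fin.sum_univ_add]

@[simp]
lemma riem_wMet_base_fiber_base_base (β : Fin q) :
    𝐑 z (Fin.castAdd q a) (Fin.natAdd p β) (Fin.castAdd q c) (Fin.castAdd q d) = 0 := by
  simp [Riem, Fin.sum_univ_add]

@[simp]
lemma riem_wMet_base_base_fiber_base (γ : Fin q) :
    𝐑 z (Fin.castAdd q a) (Fin.castAdd q b) (Fin.natAdd p γ) (Fin.castAdd q d) = 0 := by
  simp [Riem, Fin.sum_univ_add, pd_comp_bpt_natAdd]

@[simp]
lemma riem_wMet_base_base_base_fiber (δ : Fin q) :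
    𝐑 z (Fin.castAdd q a) (Fin.castAdd q b) (Fin.castAdd q c) (Fin.natAdd p δ) = 0 := by
  simp [Riem, Fin.sum_univ_add, pd_comp_bpt_natAdd]

lemma cov4_riem_wMet_base_fiber (δ : Fin q) :
    cov4 𝐠 𝐠⁻¹ 𝐑 z (Fin.castAdd q a) (Fin.castAdd q b) (Fin.castAdd q c) (Fin.castAdd q d)
      (Fin.natAdd p δ) = 0 := by
  simp [cov4, Fin.sum_univ_add, pd_comp_bpt_natAdd (fun x => Riem gbar gbinv x a b c d)]

end WarpedCurvature

section WarpedFiberCurvature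

variable {p q : ℕ} (gbar gbinv : (Fin p → ℝ) → Fin p → Fin p → ℝ)
  {gtil gtinv : (Fin q → ℝ) → Fin q → Fin q → ℝ} {f : (Fin p → ℝ) → ℝ}
  {U : Set (Fin p → ℝ)} {V : Set (Fin q → ℝ)} {z : Fin (p + q) → ℝ}

local notation "𝐠" => wMet gbar gtil f
local notation "𝐠⁻¹" => wMetInv gbinv gtinv f

lemma pd_christoffel_wMet_fiber_fiber_base (hU : IsOpen U) (hV : IsOpen V)
    (hf : ContDiffOn ℝ (⊤ : ℕ∞) f U)
    (hgt : ∀ α β, ContDiffOn ℝ (⊤ : ℕ∞) (fun y => gtil y α β) V)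
    (hgts : ∀ y ∈ V, ∀ α β, gtil y α β = gtil y β α)
    (hgti : ∀ y ∈ V, ∀ α β, ∑ γ, gtil y α γ * gtinv y γ β = if α = β then 1 else 0)
    (hz : z ∈ Mset U V) (γ β : Fin q) (a b : Fin p) :
    pd (Christoffel 𝐠 𝐠⁻¹ (Fin.natAdd p γ) (Fin.natAdd p β) (Fin.castAdd q a))
        (Fin.castAdd q b) z =
      if γ = β then pd (fun x => pd f a x / (2 * f x)) b (bpt z) else 0 := by
  have hΓ : Christoffel 𝐠 𝐠⁻¹ (Fin.natAdd p γ) (Fin.natAdd p β) (Fin.castAdd q a) =ᶠ[nhds z]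
      fun y => if γ = β then pd f a (bpt y) / (2 * f (bpt y)) else 0 := by
    filter_upwards [(isOpen_Mset hU hV).mem_nhds hz] with y hy
    exact christoffel_wMet_fiber_fiber_base gbar gbinv
      ((hf.contDiffAt (hU.mem_nhds hy.1)).differentiableAt (by simp))
      (fun α β => ((hgt α β).contDiffAt (hV.mem_nhds hy.2)).differentiableAt (by simp))
      (hgts _ hy.2) (sum_mul_eq_ite_comm (hgti _ hy.2)) γ β
  rw [pd_congr hΓ]
  split_ifs
  · exact pd_comp_bpt_castAdd (fun x => pd f a x / (2 * f x)) b z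
  · exact pd_const 0 _ z

lemma riem_wMet_fiber_base_fiber_base (hU : IsOpen U) (hV : IsOpen V)
    (hf : ContDiffOn ℝ (⊤ : ℕ∞) f U) (hfpos : ∀ x ∈ U, 0 < f x)
    (hgt : ∀ α β, ContDiffOn ℝ (⊤ : ℕ∞) (fun y => gtil y α β) V)
    (hgts : ∀ y ∈ V, ∀ α β, gtil y α β = gtil y β α)
    (hgti : ∀ y ∈ V, ∀ α β, ∑ γ, gtil y α γ * gtinv y γ β = if α = β then 1 else 0)
    (hz : z ∈ Mset U V) (γ δ : Fin q) (a b : Fin p) :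
    Riem 𝐠 𝐠⁻¹ z (Fin.natAdd p γ) (Fin.castAdd q a) (Fin.natAdd p δ) (Fin.castAdd q b) =
      f (bpt z) * gtil (fpt z) γ δ * Tten gbar gbinv f (bpt z) a b := by
  have hfz : DifferentiableAt ℝ f (bpt z) :=
    (hf.contDiffAt (hU.mem_nhds hz.1)).differentiableAt (by simp)
  have hgz : ∀ α β, DifferentiableAt ℝ (fun y => gtil y α β) (fpt z) :=
    fun α β => ((hgt α β).contDiffAt (hV.mem_nhds hz.2)).differentiableAt (by simp)
  have hinv := sum_mul_eq_ite_comm (hgti _ hz.2)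
  have hf0 : f (bpt z) ≠ 0 := (hfpos _ hz.1).ne'
  have hT : -pd (fun x => pd f a x / (2 * f x)) b (bpt z)
      + ∑ c, pd f c (bpt z) / (2 * f (bpt z)) * Christoffel gbar gbinv c b a (bpt z)
      - pd f b (bpt z) / (2 * f (bpt z)) * (pd f a (bpt z) / (2 * f (bpt z))) =
        Tten gbar gbinv f (bpt z) a b := by
    have hsum : ∑ c, pd f c (bpt z) / (2 * f (bpt z)) * Christoffel gbar gbinv c b a (bpt z) =
        (∑ c, Christoffel gbar gbinv c b a (bpt z) * pd f c (bpt z)) / (2 * f (bpt z)) := by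
      rw [Finset.sum_div]
      exact Finset.sum_congr rfl fun _ _ => by ring
    rw [pd_div (differentiableAt_pd hU hf hz.1 a) (hfz.const_mul 2) (mul_ne_zero two_ne_zero hf0),
      pd_const_mul hfz, hsum, Tten]
    field_simp
    ring
  simp [Riem, Fin.sum_univ_add, neg_ite, ite_add_ite, ite_sub_ite, hT,
    pd_christoffel_wMet_fiber_fiber_base gbar gbinv hU hV hf hgt hgts hgti hz,
    christoffel_wMet_fiber_fiber_base gbar gbinv hfz hgz (hgts _ hz.2) hinv,
    christoffel_wMet_fiber_base_fiber gbar gbinv hfz hgz hinv]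

lemma ric_wMet_base (hU : IsOpen U) (hV : IsOpen V)
    (hf : ContDiffOn ℝ (⊤ : ℕ∞) f U) (hfpos : ∀ x ∈ U, 0 < f x)
    (hgt : ∀ α β, ContDiffOn ℝ (⊤ : ℕ∞) (fun y => gtil y α β) V)
    (hgts : ∀ y ∈ V, ∀ α β, gtil y α β = gtil y β α)
    (hgti : ∀ y ∈ V, ∀ α β, ∑ γ, gtil y α γ * gtinv y γ β = if α = β then 1 else 0)
    (hz : z ∈ Mset U V) (a b : Fin p) :
    Ric 𝐠 𝐠⁻¹ z (Fin.castAdd q a) (Fin.castAdd q b) =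
      Ric gbar gbinv (bpt z) a b + q * Tten gbar gbinv f (bpt z) a b := by
  have hf0 : f (bpt z) ≠ 0 := (hfpos _ hz.1).ne'
  have hfiber : ∑ γ, ∑ δ, (f (bpt z))⁻¹ * gtinv (fpt z) γ δ *
      (f (bpt z) * gtil (fpt z) γ δ * Tten gbar gbinv f (bpt z) a b) =
        q * Tten gbar gbinv f (bpt z) a b := by
    calc _ = (∑ γ, ∑ δ, gtinv (fpt z) γ δ * gtil (fpt z) δ γ) * Tten gbar gbinv f (bpt z) a b := by
          simp only [Finset.sum_mul]
          refine Finset.sum_congr rfl fun γ _ => Finset.sum_congr rfl fun δ _ => ?_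
          rw [hgts _ hz.2 γ δ]
          field_simp
      _ = _ := by simp [sum_mul_eq_ite_comm (hgti _ hz.2)]
  simp [Ric, Fin.sum_univ_add,
    riem_wMet_fiber_base_fiber_base gbar gbinv hU hV hf hfpos hgt hgts hgti hz, hfiber]

end WarpedFiberCurvature

def IsGeneralizedRoterAt {k : ℕ} (R : (Fin k → ℝ) → Fin k → Fin k → Fin k → Fin k → ℝ)
    (g S T : (Fin k → ℝ) → Fin k → Fin k → ℝ) (x : Fin k → ℝ) : Prop :=
  ∃ L₁ L₂ L₃ L₄ L₅ L₆ : ℝ, ∀ a b c d : Fin k,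
    R x a b c d = L₁ * KN g g x a b c d - L₂ * KN g S x a b c d - L₃ * KN S S x a b c d
      - L₄ * KN g T x a b c d - L₅ * KN S T x a b c d - L₆ * KN T T x a b c d

lemma KN_castAdd {p q : ℕ} {A B : (Fin (p + q) → ℝ) → Fin (p + q) → Fin (p + q) → ℝ}
    {A' B' : (Fin p → ℝ) → Fin p → Fin p → ℝ} {z : Fin (p + q) → ℝ} {x : Fin p → ℝ}
    (hA : ∀ i j, A z (Fin.castAdd q i) (Fin.castAdd q j) = A' x i j)
    (hB : ∀ i j, B z (Fin.castAdd q i) (Fin.castAdd q j) = B' x i j) (a b c d : Fin p) :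
    KN A B z (Fin.castAdd q a) (Fin.castAdd q b) (Fin.castAdd q c) (Fin.castAdd q d) =
      KN A' B' x a b c d := by
  simp [KN, hA, hB]

lemma isGeneralizedRoterAt_of_relation {k : ℕ}
    {R : (Fin k → ℝ) → Fin k → Fin k → Fin k → Fin k → ℝ}
    {g S T : (Fin k → ℝ) → Fin k → Fin k → ℝ} {x : Fin k → ℝ} {t π φ ψ θ : ℝ} (hπ : π ≠ 0)
    (h : ∀ a b c d, 0 = π * R x a b c d
      + φ * KN (fun y i j => S y i j + t * T y i j) (fun y i j => S y i j + t * T y i j) x a b c d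
      + ψ * KN g (fun y i j => S y i j + t * T y i j) x a b c d + θ * KN g g x a b c d) :
    IsGeneralizedRoterAt R g S T x := by
  refine ⟨-θ / π, ψ / π, φ / π, t * ψ / π, 2 * t * φ / π, t ^ 2 * φ / π, fun a b c d => ?_⟩
  have h := h a b c d
  simp only [KN] at h ⊢
  field_simp
  linear_combination -h

theorem base_of_warped_SGK_is_GRT_general
    {p q : ℕ}
    (U : Set (Fin p → ℝ)) (V : Set (Fin q → ℝ))
    (hU : IsOpen U) (hV : IsOpen V)
    (gbar gbinv : (Fin p → ℝ) → Fin p → Fin p → ℝ)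
    (gtil gtinv : (Fin q → ℝ) → Fin q → Fin q → ℝ)
    (f : (Fin p → ℝ) → ℝ)
    (hgt : ∀ a b, ContDiffOn ℝ (⊤ : ℕ∞) (fun y => gtil y a b) V)
    (hgts : ∀ y ∈ V, ∀ a b, gtil y a b = gtil y b a)
    (hgti : ∀ y ∈ V, ∀ a b, (∑ c, gtil y a c * gtinv y c b) = if a = b then (1 : ℝ) else 0)
    (hf : ContDiffOn ℝ (⊤ : ℕ∞) f U)
    (hfpos : ∀ x ∈ U, 0 < f x)
    (piF phiF psiF thetaF : (Fin (p + q) → ℝ) → Fin (p + q) → ℝ)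
    (hsgk : ∀ z ∈ Mset U V, SGK (wMet gbar gtil f) (wMetInv gbinv gtinv f) piF phiF psiF thetaF z) :
    ∀ z ∈ Mset U V, (∃ ε : Fin q, piF z (Fin.natAdd p ε) ≠ 0) →
      ∃ L₁ L₂ L₃ L₄ L₅ L₆ : ℝ, ∀ a b c d : Fin p,
        Riem gbar gbinv (bpt z) a b c d =
          L₁ * KN gbar gbar (bpt z) a b c d - L₂ * KN gbar (Ric gbar gbinv) (bpt z) a b c d - L₃ * KN (Ric gbar gbinv) (Ric gbar gbinv) (bpt z) a b c d
          - L₄ * KN gbar (Tten gbar gbinv f) (bpt z) a b c d - L₅ * KN (Ric gbar gbinv) (Tten gbar gbinv f) (bpt z) a b c d - L₆ * KN (Tten gbar gbinv f) (Tten gbar gbinv f) (bpt z) a b c d := by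
  rintro z hz ⟨ε, hπ⟩
  have hg : ∀ i j, wMet gbar gtil f z (Fin.castAdd q i) (Fin.castAdd q j) = gbar (bpt z) i j :=
    fun i j => by simp
  let S : (Fin p → ℝ) → Fin p → Fin p → ℝ := fun x i j =>
    Ric gbar gbinv x i j + q * Tten gbar gbinv f x i j
  have hS : ∀ i j, Ric (wMet gbar gtil f) (wMetInv gbinv gtinv f) z (Fin.castAdd q i)
      (Fin.castAdd q j) = S (bpt z) i j :=
    ric_wMet_base gbar gbinv hU hV hf hfpos hgt hgts hgti hz
  refine isGeneralizedRoterAt_of_relation (t := q) (φ := phiF z (Fin.natAdd p ε))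
    (ψ := psiF z (Fin.natAdd p ε)) (θ := thetaF z (Fin.natAdd p ε)) hπ fun a b c d => ?_
  have h := hsgk z hz (Fin.castAdd q a) (Fin.castAdd q b) (Fin.castAdd q c) (Fin.castAdd q d)
    (Fin.natAdd p ε)
  rwa [cov4_riem_wMet_base_fiber, riem_wMet_base, KN_castAdd hS hS, KN_castAdd hg hS,
    KN_castAdd hg hg] at h

/-- Corollary 4.1(ii): the base of a warped product SGK manifold is of generalized Roter type
wherever the fiber part of the 1-form Π is nonzero. -/
theorem base_of_warped_SGK_is_GRT
    {p q : ℕ} (hp : 1 ≤ p) (hq : 1 ≤ q)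
    (U : Set (Fin p → ℝ)) (V : Set (Fin q → ℝ))
    (hU : IsOpen U) (hV : IsOpen V)
    (gbar gbinv : (Fin p → ℝ) → Fin p → Fin p → ℝ)
    (gtil gtinv : (Fin q → ℝ) → Fin q → Fin q → ℝ)
    (f : (Fin p → ℝ) → ℝ)
    (hgb : ∀ a b, ContDiffOn ℝ (⊤ : ℕ∞) (fun x => gbar x a b) U)
    (hgbs : ∀ x ∈ U, ∀ a b, gbar x a b = gbar x b a)
    (hgbi : ∀ x ∈ U, ∀ a b, (∑ c, gbar x a c * gbinv x c b) = if a = b then (1 : ℝ) else 0)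
    (hgt : ∀ a b, ContDiffOn ℝ (⊤ : ℕ∞) (fun y => gtil y a b) V)
    (hgts : ∀ y ∈ V, ∀ a b, gtil y a b = gtil y b a)
    (hgti : ∀ y ∈ V, ∀ a b, (∑ c, gtil y a c * gtinv y c b) = if a = b then (1 : ℝ) else 0)
    (hf : ContDiffOn ℝ (⊤ : ℕ∞) f U)
    (hfpos : ∀ x ∈ U, 0 < f x)
    (piF phiF psiF thetaF : (Fin (p + q) → ℝ) → Fin (p + q) → ℝ)
    (hpiF : ∀ m, ContDiffOn ℝ (⊤ : ℕ∞) (fun z => piF z m) (Mset U V))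
    (hphiF : ∀ m, ContDiffOn ℝ (⊤ : ℕ∞) (fun z => phiF z m) (Mset U V))
    (hpsiF : ∀ m, ContDiffOn ℝ (⊤ : ℕ∞) (fun z => psiF z m) (Mset U V))
    (hthetaF : ∀ m, ContDiffOn ℝ (⊤ : ℕ∞) (fun z => thetaF z m) (Mset U V))
    (hsgk : ∀ z ∈ Mset U V, SGK (wMet gbar gtil f) (wMetInv gbinv gtinv f) piF phiF psiF thetaF z) :
    ∀ z ∈ Mset U V, (∃ ε : Fin q, piF z (Fin.natAdd p ε) ≠ 0) →
      ∃ L₁ L₂ L₃ L₄ L₅ L₆ : ℝ, ∀ a b c d : Fin p,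
        Riem gbar gbinv (bpt z) a b c d =
          L₁ * KN gbar gbar (bpt z) a b c d - L₂ * KN gbar (Ric gbar gbinv) (bpt z) a b c d - L₃ * KN (Ric gbar gbinv) (Ric gbar gbinv) (bpt z) a b c d
          - L₄ * KN gbar (Tten gbar gbinv f) (bpt z) a b c d - L₅ * KN (Ric gbar gbinv) (Tten gbar gbinv f) (bpt z) a b c d - L₆ * KN (Tten gbar gbinv f) (Tten gbar gbinv f) (bpt z) a b c d :=
  base_of_warped_SGK_is_GRT_general U V hU hV gbar gbinv gtil gtinv f hgt hgts hgti hf hfpos piF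
    phiF psiF thetaF hsgk
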